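/- Let G be a group with finite generating set S such that the Cayley graph Γ(G,S) has only finitely many (graph) cone types up to weak equivalence. Then the geodesic growth series L(z) = Σ_{n≥0} l(n) zⁿ is a rational function: there exist polynomials P and Q with integer coefficients, Q ≠ 0, such that Q(z)·L(z) = P(z) as formal power series. -/

import Mathlib

variable {G : Type*} [Group G]

noncomputable def wordLength (S : Set G) (g : G) : ℕ :=
  sInf {n | ∃ w : List G, (∀ x ∈ w, x ∈ S ∪ S⁻¹) ∧ w.length = n ∧ w.prod = g}

def cayley (S : Set G) : SimpleGraph G where
  Adj g h := g ≠ h ∧ h * g⁻¹ ∈ S ∪ S⁻¹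
  symm := by
    constructor
    rintro g h ⟨hne, hmem⟩
    refine ⟨hne.symm, ?_⟩
    have key : g * h⁻¹ = (h * g⁻¹)⁻¹ := by group
    rw [key]
    rcases hmem with h1 | h1
    · exact Or.inr (by simpa [Set.mem_inv] using h1)
    · exact Or.inl (by simpa [Set.mem_inv] using h1)
  loopless := ⟨fun g h => h.1 rfl⟩

def coneSet (S : Set G) (g : G) : Set G :=
  {h | wordLength S h = wordLength S g + (cayley S).dist g h}

lemma self_mem_coneSet (S : Set G) (g : G) : g ∈ coneSet S g := by
  simp [coneSet]

/-- The cone `C(g)` as a subgraph of the Cayley graph. -/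
def coneSubgraph (S : Set G) (g : G) : (cayley S).Subgraph where
  verts := coneSet S g
  Adj a b := a ∈ coneSet S g ∧ b ∈ coneSet S g ∧ (cayley S).Adj a b
  adj_sub h := h.2.2
  edge_vert h := h.1
  symm := ⟨by rintro a b ⟨ha, hb, hab⟩; exact ⟨hb, ha, hab.symm⟩⟩

/-- The extended cone `C̄(g)` as a subgraph of the Cayley graph: the cone together with,
for each vertex `h` of the cone and each tangent edge `{h,k}` of the Cayley graph,
the vertex `k` and the edge `{h,k}`. -/
def extConeSubgraph (S : Set G) (g : G) : (cayley S).Subgraph where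
  verts := coneSet S g ∪
    {k | ∃ h ∈ coneSet S g, (cayley S).Adj h k ∧ wordLength S h = wordLength S k}
  Adj a b := (cayley S).Adj a b ∧
    ((a ∈ coneSet S g ∧ b ∈ coneSet S g) ∨
      (wordLength S a = wordLength S b ∧ (a ∈ coneSet S g ∨ b ∈ coneSet S g)))
  adj_sub h := h.1
  edge_vert := by
    rintro a b ⟨hadj, hc | ⟨ht, hc⟩⟩
    · exact Or.inl hc.1
    · rcases hc with hc | hc
      · exact Or.inl hc
      · exact Or.inr ⟨b, hc, hadj.symm, ht.symm⟩
  symm := by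
    constructor
    rintro a b ⟨hadj, hc | ⟨ht, hc⟩⟩
    · exact ⟨hadj.symm, Or.inl ⟨hc.2, hc.1⟩⟩
    · exact ⟨hadj.symm, Or.inr ⟨ht.symm, hc.symm⟩⟩

lemma self_mem_extCone (S : Set G) (g : G) : g ∈ (extConeSubgraph S g).verts :=
  Set.mem_union_left _ (self_mem_coneSet S g)

/-- Strong equivalence of extended cones: a graph isomorphism of the extended cones sending
root to root and cone onto cone. -/
noncomputable def StrongEquiv (S : Set G) (g h : G) : Prop :=
  ∃ T : (extConeSubgraph S g).coe ≃g (extConeSubgraph S h).coe,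
    ((T ⟨g, self_mem_extCone S g⟩ : (extConeSubgraph S h).verts) : G) = h ∧
    ∀ x : (extConeSubgraph S g).verts,
      ((x : G) ∈ coneSet S g ↔ ((T x : (extConeSubgraph S h).verts) : G) ∈ coneSet S h)

/-- Weak equivalence of cones: a root-preserving graph isomorphism of the cones. -/
noncomputable def WeakEquiv (S : Set G) (g h : G) : Prop :=
  ∃ T : (cayley S).induce (coneSet S g) ≃g (cayley S).induce (coneSet S h),
    ((T ⟨g, self_mem_coneSet S g⟩ : coneSet S h) : G) = h

/-- `m(C̄(g))`: the number of norm decreasing edges at `g`. -/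
noncomputable def mval (S : Set G) (g : G) : ℕ :=
  Set.ncard {h | (cayley S).Adj g h ∧ wordLength S g = wordLength S h + 1}

/-- `n(C̄(g),C̄(h))`: the number of norm increasing edges `(g,h')` at `g` with
`C̄(h')` strongly equivalent to `C̄(h)`. -/
noncomputable def nval (S : Set G) (g h : G) : ℕ :=
  Set.ncard {h' | (cayley S).Adj g h' ∧ wordLength S h' = wordLength S g + 1 ∧
    StrongEquiv S h' h}

/-- The geodesic growth function `l(n)`: the number of geodesic words of length `n`
over the alphabet `S ∪ S⁻¹`. -/
noncomputable def geodesicGrowth (S : Set G) (n : ℕ) : ℕ :=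
  Set.ncard {w : List G | (∀ x ∈ w, x ∈ S ∪ S⁻¹) ∧ w.length = n ∧
    wordLength S w.prod = n}


/-!
Word length is the distance from `1` in the Cayley graph, so the cones are those of a connected
rooted graph. A root-preserving isomorphism of cones preserves distances inside the cone, and
membership in a subcone can be read off those distances; hence it carries the children of `g`,
with their cone types, to the children of its image. So the cone type of an element determines how
many children of each cone type it has. A geodesic word of length `n + 1` is a geodesic word of
length `n` extended by the letter leading to a child, so counting geodesic words by the cone type of
their value gives a recurrence `vₙ₊₁ = A vₙ` with an integer transfer matrix `A` indexed by the
finitely many cone types. By Cayley–Hamilton, `l(n) = ∑ (Aⁿ v₀)` satisfies a linear recurrence with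
monic characteristic polynomial, and the reversal of that polynomial is a denominator for `L(z)`.
-/

lemma Set.Finite.sum_comp_eq_sum_mul_ncard {R α β : Type*} [CommSemiring R] [DecidableEq β]
    {s : Set α} (hs : s.Finite) {f : α → β} {t : Finset β} (hf : ∀ a ∈ s, f a ∈ t)
    (g : β → R) :
    ∑ a ∈ hs.toFinset, g (f a) = ∑ b ∈ t, g b * {a ∈ s | f a = b}.ncard := by
  rw [← Finset.sum_fiberwise_of_maps_to fun a ha => hf a (hs.mem_toFinset.mp ha)]
  refine Finset.sum_congr rfl fun b _ => ?_
  rw [Finset.sum_congr rfl fun a ha => by rw [(Finset.mem_filter.mp ha).2], Finset.sum_const,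
    nsmul_eq_mul, mul_comm, ← Set.ncard_coe_finset]
  congr 3
  ext a
  simp

lemma Set.Finite.ncard_eq_sum_ncard_fiber {α β : Type*} [DecidableEq β] {s : Set α}
    (hs : s.Finite) {f : α → β} {t : Finset β} (hf : ∀ a ∈ s, f a ∈ t) :
    s.ncard = ∑ b ∈ t, {a ∈ s | f a = b}.ncard := by
  simpa [Set.ncard_eq_toFinset_card s hs] using hs.sum_comp_eq_sum_mul_ncard hf (fun _ => (1 : ℕ))

namespace SimpleGraph

variable {V W : Type*} {Γ : SimpleGraph V} {Γ' : SimpleGraph W}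

lemma Hom.dist_le (f : Γ →g Γ') {u v : V} (h : Γ.Reachable u v) :
    Γ'.dist (f u) (f v) ≤ Γ.dist u v := by
  obtain ⟨p, hp⟩ := h.exists_walk_length_eq_dist
  simpa [hp] using Γ'.dist_le (p.map f)

lemma Iso.dist_eq (f : Γ ≃g Γ') (u v : V) : Γ'.dist (f u) (f v) = Γ.dist u v := by
  by_cases h : Γ.Reachable u v
  · refine le_antisymm (f.toHom.dist_le h) ?_
    simpa using f.symm.toHom.dist_le (u := f u) (v := f v) (h.map f.toHom)
  · rw [dist_eq_zero_of_not_reachable h,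
      dist_eq_zero_of_not_reachable (mt Iso.reachable_iff.mp h)]

lemma dist_induce_eq_of_support_subset {s : Set V} {u v : V} (p : Γ.Walk u v)
    (hp : p.length = Γ.dist u v) (hs : ∀ x ∈ p.support, x ∈ s) :
    (Γ.induce s).dist ⟨u, hs u p.start_mem_support⟩ ⟨v, hs v p.end_mem_support⟩ =
      Γ.dist u v := by
  have hlen : (p.induce s hs).length = p.length :=
    (Walk.length_map _ _).symm.trans (congrArg Walk.length (p.map_induce hs))
  refine le_antisymm ((dist_le _).trans_eq (hlen.trans hp)) ?_
  exact (Embedding.induce s).toHom.dist_le ⟨p.induce s hs⟩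

def Iso.restrictInduce {s t : Set V} {s' t' : Set W} (T : Γ.induce s ≃g Γ'.induce s')
    (hts : t ⊆ s) (hts' : t' ⊆ s') (hT : ∀ x : s, (x : V) ∈ t ↔ (T x : W) ∈ t') :
    Γ.induce t ≃g Γ'.induce t' where
  toFun x := ⟨T ⟨x, hts x.2⟩, (hT _).mp x.2⟩
  invFun y := ⟨T.symm ⟨y, hts' y.2⟩, (hT _).mpr (by simp)⟩
  left_inv x := by simp
  right_inv y := by simp
  map_rel_iff' := T.map_rel_iff

variable (Γ) in
def cone (o g : V) : Set V := {x | Γ.dist o x = Γ.dist o g + Γ.dist g x}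

variable {o g g' x : V}

@[simp]
lemma mem_cone_self : g ∈ Γ.cone o g := by simp [cone]

lemma cone_subset_cone (hΓ : Γ.Connected) (hg' : g' ∈ Γ.cone o g) :
    Γ.cone o g' ⊆ Γ.cone o g := fun x hx => by
  have := hΓ.dist_triangle (u := o) (v := g) (w := x)
  have := hΓ.dist_triangle (u := g) (v := g') (w := x)
  simp only [cone, Set.mem_ofPred_eq] at hg' hx ⊢
  omega

lemma support_subset_cone (hΓ : Γ.Connected) (hx : x ∈ Γ.cone o g) (p : Γ.Walk g x)
    (hp : p.length = Γ.dist g x) : ∀ y ∈ p.support, y ∈ Γ.cone o g := by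
  classical
  intro y hy
  have htake := Γ.dist_le (p.takeUntil y hy)
  have hdrop := Γ.dist_le (p.dropUntil y hy)
  have hsplit := congrArg Walk.length (p.take_spec hy)
  rw [Walk.length_append] at hsplit
  have := hΓ.dist_triangle (u := o) (v := g) (w := y)
  have := hΓ.dist_triangle (u := o) (v := y) (w := x)
  simp only [cone, Set.mem_ofPred_eq] at hx ⊢
  omega

lemma dist_induce_cone (hΓ : Γ.Connected) (hg' : g' ∈ Γ.cone o g) (hx : x ∈ Γ.cone o g') :
    (Γ.induce (Γ.cone o g)).dist ⟨g', hg'⟩ ⟨x, cone_subset_cone hΓ hg' hx⟩ = Γ.dist g' x := by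
  obtain ⟨p, hp⟩ := hΓ.exists_walk_length_eq_dist g' x
  exact dist_induce_eq_of_support_subset p hp
    fun y hy => cone_subset_cone hΓ hg' (support_subset_cone hΓ hx p hp y hy)

lemma connected_induce_cone (hΓ : Γ.Connected) : (Γ.induce (Γ.cone o g)).Connected := by
  have hroot : ∀ x : Γ.cone o g, (Γ.induce (Γ.cone o g)).Reachable ⟨g, mem_cone_self⟩ x := by
    rintro ⟨x, hx⟩
    obtain ⟨p, hp⟩ := hΓ.exists_walk_length_eq_dist g x
    exact ⟨p.induce _ (support_subset_cone hΓ hx p hp)⟩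
  exact (connected_iff _).mpr ⟨fun x y => (hroot x).symm.trans (hroot y), ⟨⟨g, mem_cone_self⟩⟩⟩

/-- Membership in a subcone is intrinsic to the ambient cone, hence preserved by isomorphisms of
cones. -/
lemma mem_cone_iff_mem_cone_induce (hΓ : Γ.Connected) (hg' : g' ∈ Γ.cone o g)
    (hx : x ∈ Γ.cone o g) :
    x ∈ Γ.cone o g' ↔
      (⟨x, hx⟩ : Γ.cone o g) ∈ (Γ.induce (Γ.cone o g)).cone ⟨g, mem_cone_self⟩ ⟨g', hg'⟩ := by
  let H := Γ.induce (Γ.cone o g)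
  change Γ.dist o x = Γ.dist o g' + Γ.dist g' x ↔
    H.dist ⟨g, _⟩ ⟨x, hx⟩ = H.dist ⟨g, _⟩ ⟨g', hg'⟩ + H.dist ⟨g', hg'⟩ ⟨x, hx⟩
  rw [dist_induce_cone hΓ mem_cone_self hx, dist_induce_cone hΓ mem_cone_self hg']
  have hg'o : Γ.dist o g' = Γ.dist o g + Γ.dist g g' := hg'
  have hxo : Γ.dist o x = Γ.dist o g + Γ.dist g x := hx
  have := hΓ.dist_triangle (u := o) (v := g') (w := x)
  have := hΓ.dist_triangle (u := g) (v := g') (w := x)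
  constructor
  · intro hxg'
    rw [dist_induce_cone hΓ hg' hxg']
    omega
  · intro h
    have : Γ.dist g' x ≤ H.dist ⟨g', hg'⟩ ⟨x, hx⟩ := (Embedding.induce _).toHom.dist_le
      ((connected_induce_cone hΓ).preconnected ⟨g', hg'⟩ ⟨x, hx⟩)
    omega

lemma Iso.mem_cone_iff (T : Γ ≃g Γ') : T x ∈ Γ'.cone (T o) (T g) ↔ x ∈ Γ.cone o g := by
  simp [cone, T.dist_eq]

variable (Γ) in
def ConeEquiv (o g h : V) : Prop :=
  ∃ T : Γ.induce (Γ.cone o g) ≃g Γ.induce (Γ.cone o h), T ⟨g, mem_cone_self⟩ = ⟨h, mem_cone_self⟩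

variable (Γ) in
def coneSetoid (o : V) : Setoid V where
  r := Γ.ConeEquiv o
  iseqv.refl _ := ⟨.refl, rfl⟩
  iseqv.symm := fun ⟨T, hT⟩ => ⟨T.symm, by rw [← hT, RelIso.symm_apply_apply]⟩
  iseqv.trans := fun ⟨T, hT⟩ ⟨U, hU⟩ => ⟨T.trans U, by rw [RelIso.trans_apply, hT, hU]⟩

lemma ConeEquiv.of_mem_cone (hΓ : Γ.Connected) {h : V}
    (T : Γ.induce (Γ.cone o g) ≃g Γ.induce (Γ.cone o h))
    (hT : T ⟨g, mem_cone_self⟩ = ⟨h, mem_cone_self⟩) (hg' : g' ∈ Γ.cone o g) :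
    Γ.ConeEquiv o g' (T ⟨g', hg'⟩) := by
  refine ⟨T.restrictInduce (cone_subset_cone hΓ hg') (cone_subset_cone hΓ (T ⟨g', hg'⟩).2)
    fun x => ?_, rfl⟩
  rw [mem_cone_iff_mem_cone_induce hΓ hg' x.2,
    mem_cone_iff_mem_cone_induce hΓ (T ⟨g', hg'⟩).2 (T x).2, ← T.mem_cone_iff, hT]

lemma ConeEquiv.ncard_neighborSet_inter_cone_eq (hΓ : Γ.Connected) {P : V → Prop}
    (hP : ∀ x y, Γ.ConeEquiv o x y → (P x ↔ P y)) {h : V} (hgh : Γ.ConeEquiv o g h) :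
    {x ∈ Γ.neighborSet g ∩ Γ.cone o g | P x}.ncard =
      {x ∈ Γ.neighborSet h ∩ Γ.cone o h | P x}.ncard := by
  obtain ⟨T, hT⟩ := hgh
  have hTsymm : T.symm ⟨h, mem_cone_self⟩ = ⟨g, mem_cone_self⟩ := by
    rw [← hT, RelIso.symm_apply_apply]
  refine Set.ncard_congr (fun x hx => T ⟨x, hx.1.2⟩) ?_ ?_ ?_
  · rintro x ⟨⟨hgx, hx⟩, hPx⟩
    have hadj := T.map_adj_iff.mpr (show (Γ.induce _).Adj ⟨g, mem_cone_self⟩ ⟨x, hx⟩ from hgx)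
    rw [hT] at hadj
    exact ⟨⟨hadj, (T ⟨x, hx⟩).2⟩, (hP _ _ (ConeEquiv.of_mem_cone hΓ T hT hx)).mp hPx⟩
  · intro x y hx hy hxy
    simpa using T.injective (Subtype.ext hxy)
  · rintro y ⟨⟨hhy, hy⟩, hPy⟩
    set x := T.symm ⟨y, hy⟩
    have hadj := T.symm.map_adj_iff.mpr
      (show (Γ.induce _).Adj ⟨h, mem_cone_self⟩ ⟨y, hy⟩ from hhy)
    rw [hTsymm] at hadj
    have hTx : T x = ⟨y, hy⟩ := T.apply_symm_apply _
    refine ⟨x, ⟨⟨hadj, x.2⟩, ?_⟩, by simp [hTx]⟩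
    have := ConeEquiv.of_mem_cone hΓ T hT x.2
    rw [Subtype.coe_eta, hTx] at this
    exact (hP _ _ this).mpr hPy

end SimpleGraph

section CayleyGraph

open SimpleGraph

variable {S : Set G}

lemma exists_word_of_walk {u v : G} (p : (cayley S).Walk u v) :
    ∃ w : List G, (∀ x ∈ w, x ∈ S ∪ S⁻¹) ∧ w.length = p.length ∧ w.prod * u = v := by
  induction p with
  | nil => exact ⟨[], by simp, rfl, one_mul _⟩
  | @cons u x v hadj p ih =>
    obtain ⟨w, hw, hlen, hprod⟩ := ih
    refine ⟨w ++ [x * u⁻¹], ?_, by simp [hlen], by simp [mul_assoc, hprod]⟩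
    exact List.forall_mem_append.mpr ⟨hw, List.forall_mem_singleton.mpr hadj.2⟩

lemma exists_walk_of_word {w : List G} (hw : ∀ x ∈ w, x ∈ S ∪ S⁻¹) (u : G) :
    ∃ p : (cayley S).Walk u (w.prod * u), p.length ≤ w.length := by
  induction w with
  | nil => exact ⟨Walk.nil.copy rfl (one_mul u).symm, by simp⟩
  | cons a w ih =>
    obtain ⟨p, hp⟩ := ih fun x hx => hw x (List.mem_cons_of_mem a hx)
    have hprod : (a :: w).prod * u = a * (w.prod * u) := by simp [mul_assoc]
    by_cases hfix : a * (w.prod * u) = w.prod * u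
    · exact ⟨p.copy rfl (hprod.trans hfix).symm, by
        simp only [Walk.length_copy, List.length_cons]; omega⟩
    · have hadj : (cayley S).Adj (w.prod * u) (a * (w.prod * u)) :=
        ⟨Ne.symm hfix, by rw [mul_inv_cancel_right]; exact hw a List.mem_cons_self⟩
      exact ⟨(p.concat hadj).copy rfl hprod.symm, by
        simp only [Walk.length_copy, Walk.length_concat, List.length_cons]; omega⟩

lemma exists_word_prod_eq (hgen : Subgroup.closure S = ⊤) (g : G) :
    ∃ w : List G, (∀ x ∈ w, x ∈ S ∪ S⁻¹) ∧ w.prod = g := by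
  have hg : g ∈ (Subgroup.closure S).toSubmonoid := by simp [hgen]
  rw [Subgroup.closure_toSubmonoid] at hg
  exact Submonoid.exists_list_of_mem_closure hg

lemma exists_word_length_eq_wordLength (hgen : Subgroup.closure S = ⊤) (g : G) :
    ∃ w : List G, (∀ x ∈ w, x ∈ S ∪ S⁻¹) ∧ w.length = wordLength S g ∧ w.prod = g := by
  obtain ⟨w, hw, hprod⟩ := exists_word_prod_eq hgen g
  exact Nat.sInf_mem
    (s := {n | ∃ w : List G, (∀ x ∈ w, x ∈ S ∪ S⁻¹) ∧ w.length = n ∧ w.prod = g})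
    ⟨w.length, w, hw, rfl, hprod⟩

lemma connected_cayley (hgen : Subgroup.closure S = ⊤) : (cayley S).Connected := by
  have hreach : ∀ g, (cayley S).Reachable 1 g := fun g => by
    obtain ⟨w, hw, hprod⟩ := exists_word_prod_eq hgen g
    obtain ⟨p, -⟩ := exists_walk_of_word hw 1
    exact ⟨p.copy rfl (by simp [hprod])⟩
  exact (connected_iff _).mpr ⟨fun g h => (hreach g).symm.trans (hreach h), ⟨1⟩⟩

lemma wordLength_eq_dist (hgen : Subgroup.closure S = ⊤) (g : G) :
    wordLength S g = (cayley S).dist 1 g := by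
  apply le_antisymm
  · obtain ⟨p, hp⟩ := (connected_cayley hgen).exists_walk_length_eq_dist 1 g
    obtain ⟨w, hw, hlen, hprod⟩ := exists_word_of_walk p
    exact Nat.sInf_le ⟨w, hw, hlen.trans hp, by simpa using hprod⟩
  · obtain ⟨w, hw, hlen, hprod⟩ := exists_word_length_eq_wordLength hgen g
    obtain ⟨p, hp⟩ := exists_walk_of_word hw 1
    calc (cayley S).dist 1 g = (cayley S).dist 1 (w.prod * 1) := by rw [mul_one, hprod]
      _ ≤ wordLength S g := (dist_le p).trans (hp.trans hlen.le)

lemma coneSet_eq_cone (hgen : Subgroup.closure S = ⊤) (g : G) :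
    coneSet S g = (cayley S).cone 1 g := by
  ext x
  simp [coneSet, cone, wordLength_eq_dist hgen]

lemma WeakEquiv.coneEquiv (hgen : Subgroup.closure S = ⊤) {g h : G} (hgh : WeakEquiv S g h) :
    (cayley S).ConeEquiv 1 g h := by
  obtain ⟨T, hT⟩ := hgh
  refine ⟨T.restrictInduce (coneSet_eq_cone hgen g).ge (coneSet_eq_cone hgen h).ge fun x => ?_,
    Subtype.ext hT⟩
  simp only [← coneSet_eq_cone hgen, Subtype.coe_prop]

lemma mem_neighborSet_inter_cone_iff (hgen : Subgroup.closure S = ⊤) {g x : G} :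
    x ∈ (cayley S).neighborSet g ∩ (cayley S).cone 1 g ↔
      (cayley S).Adj g x ∧ wordLength S x = wordLength S g + 1 := by
  simp only [Set.mem_inter_iff, mem_neighborSet, wordLength_eq_dist hgen]
  exact and_congr_right fun hadj => by rw [← dist_eq_one_iff_adj.mpr hadj]; rfl

end CayleyGraph

section GeodesicWords

open SimpleGraph Matrix

variable {S : Set G}

def geodesicWords (S : Set G) (n : ℕ) : Set (List G) :=
  {w | (∀ x ∈ w, x ∈ S ∪ S⁻¹) ∧ w.length = n ∧ wordLength S w.prod = n}

lemma finite_geodesicWords (hS : S.Finite) (n : ℕ) : (geodesicWords S n).Finite := by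
  have : Finite ↥(S ∪ S⁻¹) := (hS.union hS.inv).to_subtype
  refine ((List.finite_length_eq ↥(S ∪ S⁻¹) n).image (List.map Subtype.val)).subset ?_
  rintro w ⟨hw, hlen, -⟩
  lift w to List ↥(S ∪ S⁻¹) using hw
  exact ⟨w, by simpa using hlen, rfl⟩

lemma wordLength_mul_le (hgen : Subgroup.closure S = ⊤) {a : G} (ha : a ∈ S ∪ S⁻¹) (g : G) :
    wordLength S (a * g) ≤ wordLength S g + 1 := by
  obtain ⟨w, hw, hlen, hprod⟩ := exists_word_length_eq_wordLength hgen g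
  exact Nat.sInf_le ⟨a :: w, List.forall_mem_cons.mpr ⟨ha, hw⟩, by simp [hlen], by simp [hprod]⟩

lemma tail_mem_geodesicWords (hgen : Subgroup.closure S = ⊤) {n : ℕ} {w : List G}
    (hw : w ∈ geodesicWords S (n + 1)) : w.tail ∈ geodesicWords S n := by
  obtain ⟨hletters, hlen, hgeod⟩ := hw
  cases w with
  | nil => simp at hlen
  | cons a v =>
    show v ∈ geodesicWords S n
    rw [List.forall_mem_cons] at hletters
    have hv : wordLength S v.prod ≤ v.length := Nat.sInf_le ⟨v, hletters.2, rfl, rfl⟩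
    have := wordLength_mul_le hgen hletters.1 v.prod
    simp only [List.length_cons, List.prod_cons] at hlen hgeod
    exact ⟨hletters.2, by omega, by omega⟩

lemma cons_mem_geodesicWords_iff (hgen : Subgroup.closure S = ⊤) {n : ℕ} {a : G} {w : List G}
    (hw : w ∈ geodesicWords S n) :
    a :: w ∈ geodesicWords S (n + 1) ↔
      a * w.prod ∈ (cayley S).neighborSet w.prod ∩ (cayley S).cone 1 w.prod := by
  obtain ⟨hletters, hlen, hgeod⟩ := hw
  rw [mem_neighborSet_inter_cone_iff hgen, hgeod]
  simp only [geodesicWords, Set.mem_ofPred_eq, List.forall_mem_cons, List.length_cons,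
    List.prod_cons, hlen, cayley, mul_inv_cancel_right, true_and]
  constructor
  · rintro ⟨⟨ha, -⟩, hgeod'⟩
    refine ⟨⟨fun h => ?_, ha⟩, hgeod'⟩
    rw [← h] at hgeod'
    omega
  · rintro ⟨⟨-, ha⟩, hgeod'⟩
    exact ⟨⟨ha, hletters⟩, hgeod'⟩

lemma ncard_geodesicWords_fiber (hgen : Subgroup.closure S = ⊤) (P : G → Prop) {n : ℕ}
    {w : List G} (hw : w ∈ geodesicWords S n) :
    {u ∈ {u ∈ geodesicWords S (n + 1) | P u.prod} | u.tail = w}.ncard =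
      {x ∈ (cayley S).neighborSet w.prod ∩ (cayley S).cone 1 w.prod | P x}.ncard := by
  have hcons : ∀ u ∈ {u ∈ {u ∈ geodesicWords S (n + 1) | P u.prod} | u.tail = w},
      ∃ a, u = a :: w := by
    rintro (_ | ⟨a, v⟩) ⟨⟨hu, -⟩, htail⟩
    · simp [geodesicWords] at hu
    · exact ⟨a, by rw [← htail]; rfl⟩
  refine Set.ncard_congr (fun u _ => u.prod) ?_ ?_ ?_
  · intro u hu
    obtain ⟨a, rfl⟩ := hcons u hu
    exact ⟨(cons_mem_geodesicWords_iff hgen hw).mp hu.1.1, hu.1.2⟩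
  · intro u u' hu hu' h
    obtain ⟨a, rfl⟩ := hcons u hu
    obtain ⟨b, rfl⟩ := hcons u' hu'
    simpa using h
  · rintro x ⟨hx, hP⟩
    refine ⟨(x * w.prod⁻¹) :: w, ⟨⟨(cons_mem_geodesicWords_iff hgen hw).mpr ?_, ?_⟩, rfl⟩, ?_⟩ <;>
      simp [hx, hP]

abbrev ConeType (S : Set G) : Type _ := Quotient ((cayley S).coneSetoid 1)

def coneType (S : Set G) (g : G) : ConeType S := Quotient.mk _ g

lemma finite_coneType (hgen : Subgroup.closure S = ⊤)
    (hfin : ∃ F : Finset G, ∀ g : G, ∃ h ∈ F, WeakEquiv S g h) : Finite (ConeType S) := by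
  obtain ⟨F, hF⟩ := hfin
  refine Finite.of_surjective (fun h : F => coneType S h) (Quotient.ind fun g => ?_)
  obtain ⟨h, hhF, hgh⟩ := hF g
  exact ⟨⟨h, hhF⟩, Quotient.sound (((cayley S).coneSetoid 1).symm' (hgh.coneEquiv hgen))⟩

noncomputable def transferMatrix (S : Set G) : Matrix (ConeType S) (ConeType S) ℤ :=
  fun c' c => {x ∈ (cayley S).neighborSet c.out ∩ (cayley S).cone 1 c.out | coneType S x = c'}.ncard

noncomputable def geodesicGrowthOfType (S : Set G) (n : ℕ) (c : ConeType S) : ℤ :=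
  {w ∈ geodesicWords S n | coneType S w.prod = c}.ncard

lemma ncard_neighborSet_inter_cone_eq_transferMatrix (hgen : Subgroup.closure S = ⊤) (g : G)
    (c' : ConeType S) :
    ({x ∈ (cayley S).neighborSet g ∩ (cayley S).cone 1 g | coneType S x = c'}.ncard : ℤ) =
      transferMatrix S c' (coneType S g) := by
  rw [transferMatrix, ConeEquiv.ncard_neighborSet_inter_cone_eq (connected_cayley hgen)
    (fun x y hxy => by rw [coneType, coneType, Quotient.sound hxy])
    (((cayley S).coneSetoid 1).symm' (Quotient.mk_out g))]
  rfl

lemma geodesicGrowth_eq_sum_geodesicGrowthOfType (hS : S.Finite) [Fintype (ConeType S)]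
    (n : ℕ) : (geodesicGrowth S n : ℤ) = ∑ c, geodesicGrowthOfType S n c := by
  classical
  rw [geodesicGrowth, ← geodesicWords, (finite_geodesicWords hS n).ncard_eq_sum_ncard_fiber
    (f := fun w => coneType S w.prod) fun _ _ => Finset.mem_univ _]
  simp [geodesicGrowthOfType]

lemma geodesicGrowthOfType_succ (hS : S.Finite) (hgen : Subgroup.closure S = ⊤)
    [Fintype (ConeType S)] (n : ℕ) :
    geodesicGrowthOfType S (n + 1) = transferMatrix S *ᵥ geodesicGrowthOfType S n := by
  classical
  funext c'
  have hW := finite_geodesicWords hS n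
  have hW' : {u ∈ geodesicWords S (n + 1) | coneType S u.prod = c'}.Finite :=
    (finite_geodesicWords hS (n + 1)).subset (Set.sep_subset _ _)
  calc geodesicGrowthOfType S (n + 1) c'
      = ∑ w ∈ hW.toFinset,
          ({u ∈ {u ∈ geodesicWords S (n + 1) | coneType S u.prod = c'} | u.tail = w}.ncard
            : ℤ) := by
        rw [geodesicGrowthOfType, hW'.ncard_eq_sum_ncard_fiber (f := List.tail)
          fun u hu => hW.mem_toFinset.mpr (tail_mem_geodesicWords hgen hu.1)]
        push_cast
        rfl
    _ = ∑ w ∈ hW.toFinset, transferMatrix S c' (coneType S w.prod) :=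
        Finset.sum_congr rfl fun w hw => by
          rw [ncard_geodesicWords_fiber hgen (coneType S · = c') (hW.mem_toFinset.mp hw),
            ncard_neighborSet_inter_cone_eq_transferMatrix hgen]
    _ = ∑ c, transferMatrix S c' c * geodesicGrowthOfType S n c :=
        hW.sum_comp_eq_sum_mul_ncard (fun _ _ => Finset.mem_univ _) _

theorem geodesicGrowth_eq_sum_pow_mulVec (hS : S.Finite) (hgen : Subgroup.closure S = ⊤)
    [Fintype (ConeType S)] [DecidableEq (ConeType S)] (n : ℕ) :
    (geodesicGrowth S n : ℤ) = ∑ c, (transferMatrix S ^ n *ᵥ geodesicGrowthOfType S 0) c := by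
  have hpow : geodesicGrowthOfType S n = transferMatrix S ^ n *ᵥ geodesicGrowthOfType S 0 := by
    induction n with
    | zero => rw [pow_zero, Matrix.one_mulVec]
    | succ n ih =>
      rw [geodesicGrowthOfType_succ hS hgen, ih, Matrix.mulVec_mulVec, ← pow_succ']
  rw [geodesicGrowth_eq_sum_geodesicGrowthOfType hS, hpow]

end GeodesicWords

section Rationality

open Polynomial Matrix

variable {R : Type*} [CommRing R]

lemma Polynomial.sum_coeff_mul_map_pow_eq_zero {A : Type*} [Ring A] [Algebra R A] {p : R[X]}
    {a : A} (hp : aeval a p = 0) (ψ : A →ₗ[R] R) (n : ℕ) :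
    ∑ i ∈ Finset.range (p.natDegree + 1), p.coeff i * ψ (a ^ (n + i)) = 0 := by
  have h : ψ (aeval a p * a ^ n) = 0 := by rw [hp, zero_mul, map_zero]
  rw [aeval_eq_sum_range, Finset.sum_mul, map_sum] at h
  convert h using 2 with i
  rw [smul_mul_assoc, ← pow_add, add_comm, map_smul, smul_eq_mul]

lemma PowerSeries.exists_mul_mk_eq_of_monic_recurrence [Nontrivial R] {p : R[X]}
    (hp : p.Monic) {u : ℕ → R}
    (hu : ∀ n, ∑ i ∈ Finset.range (p.natDegree + 1), p.coeff i * u (n + i) = 0) :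
    ∃ P Q : R[X], Q ≠ 0 ∧ (Q : PowerSeries R) * PowerSeries.mk u = P := by
  set D := p.natDegree
  -- the reversal `X ^ D * p (1 / X)` of `p`
  set Q : R[X] := ∑ i ∈ Finset.range (D + 1), Polynomial.C (p.coeff i) * Polynomial.X ^ (D - i)
  have hQ0 : Q.coeff 0 = 1 := by
    rw [finsetSum_coeff, Finset.sum_eq_single D]
    · rw [Nat.sub_self, pow_zero, mul_one, coeff_C_zero]
      exact hp.coeff_natDegree
    · intro i hi hiD
      rw [Polynomial.coeff_C_mul_X_pow, if_neg (by rw [Finset.mem_range] at hi; omega)]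
    · simp
  have hvanish : ∀ m, D ≤ m → PowerSeries.coeff m ((Q : PowerSeries R) * PowerSeries.mk u) = 0 := by
    intro m hm
    have hcoe : (Q : PowerSeries R) =
        ∑ i ∈ Finset.range (D + 1), PowerSeries.C (p.coeff i) * PowerSeries.X ^ (D - i) := by
      rw [← coeToPowerSeries.ringHom_apply, map_sum]
      simp [coeToPowerSeries.ringHom_apply]
    rw [hcoe, Finset.sum_mul, map_sum, ← hu (m - D)]
    refine Finset.sum_congr rfl fun i hi => ?_
    rw [Finset.mem_range] at hi
    rw [mul_assoc, PowerSeries.coeff_C_mul, PowerSeries.coeff_X_pow_mul', if_pos (by omega),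
      PowerSeries.coeff_mk]
    congr 2
    omega
  refine ⟨((Q : PowerSeries R) * PowerSeries.mk u).trunc D, Q, fun h => by simp [h] at hQ0, ?_⟩
  ext m
  rw [Polynomial.coeff_coe, PowerSeries.coeff_trunc]
  split_ifs with hm
  · rfl
  · exact hvanish m (not_lt.mp hm)

lemma PowerSeries.exists_mul_mk_eq_of_eq_sum_pow_mulVec [Nontrivial R] {ι : Type*} [Fintype ι]
    [DecidableEq ι] (A : Matrix ι ι R) (v : ι → R) {u : ℕ → R}
    (hu : ∀ n, u n = ∑ i, (A ^ n *ᵥ v) i) :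
    ∃ P Q : R[X], Q ≠ 0 ∧ (Q : PowerSeries R) * PowerSeries.mk u = P := by
  let ψ : Matrix ι ι R →ₗ[R] R :=
    { toFun M := ∑ i, (M *ᵥ v) i
      map_add' M N := by simp [Matrix.add_mulVec, Finset.sum_add_distrib]
      map_smul' c M := by simp [Matrix.smul_mulVec, Finset.mul_sum] }
  refine exists_mul_mk_eq_of_monic_recurrence A.charpoly_monic fun n => ?_
  simp only [hu]
  exact Polynomial.sum_coeff_mul_map_pow_eq_zero A.aeval_self_charpoly ψ n

end Rationality

/-- If the Cayley graph has finitely many cone types (up to weak equivalence), then the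
geodesic growth series `L(z) = Σ l(n) zⁿ` is rational. -/
theorem geodesic_growth_series_rational (S : Set G) (hS : S.Finite)
    (hgen : Subgroup.closure S = ⊤)
    (hfin : ∃ F : Finset G, ∀ g : G, ∃ h ∈ F, WeakEquiv S g h) :
    ∃ P Q : Polynomial ℤ, Q ≠ 0 ∧
      (Q : PowerSeries ℤ) * PowerSeries.mk (fun n => (geodesicGrowth S n : ℤ))
        = (P : PowerSeries ℤ) := by
  classical
  have : Finite (ConeType S) := finite_coneType hgen hfin
  have : Fintype (ConeType S) := Fintype.ofFinite _
  exact PowerSeries.exists_mul_mk_eq_of_eq_sum_pow_mulVec _ _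
    (geodesicGrowth_eq_sum_pow_mulVec hS hgen)
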